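/- arXiv:2407.05144 — 2 statements merged into one kernel-verified Lean document; each statement's English description precedes it below -/
import Mathlib

section
/- Let E ⊆ ℝ be Lebesgue measurable, define ρ : ℝ → ℝ by ρ(t) := sgn(t)·leb(E ∩ [min(0,t), max(0,t)]), and let ζ(s) := inf{ t ∈ ℝ : ρ(t) > s } be the right-continuous inverse of ρ on the interior of the range of ρ. Then the pushforward of Lebesgue measure on (inf ρ, sup ρ) under ζ equals the measure 𝟙_E · leb, i.e. for every Borel set A, leb({ s ∈ (inf ρ, sup ρ) : ζ(s) ∈ A }) = leb(E ∩ A). -/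
/-!
The function ρ is the primitive `t ↦ ∫₀ᵗ 𝟙_E`, a continuous nondecreasing function whose
Lebesgue–Stieltjes measure is `𝟙_E · leb`. For any continuous nondecreasing `f` and any `s`
strictly between `inf f` and `sup f`, continuity gives `ζ s < c ↔ s < f c`. So `ζ` pulls
`[a, b)` back to `[f a, f b)` (intersected with the range interior, which only removes an
endpoint), and the pushforward of Lebesgue measure gives `[a, b)` the mass `f b - f a`, exactly
as the Stieltjes measure of `f` does.
-/

open MeasureTheory Set Filter Topology

noncomputable def rightContInv (f : ℝ → ℝ) (s : ℝ) : ℝ := sInf {t | s < f t}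

def rangeInterior (f : ℝ → ℝ) : Set ℝ := {s | (∃ t, f t < s) ∧ ∃ t, s < f t}

section RightContInv

variable {f : ℝ → ℝ}

theorem ordConnected_rangeInterior (f : ℝ → ℝ) : (rangeInterior f).OrdConnected :=
  ⟨fun _ ⟨⟨t₁, h₁⟩, _⟩ _ ⟨_, ⟨t₂, h₂⟩⟩ _ hz =>
    ⟨⟨t₁, h₁.trans_le hz.1⟩, ⟨t₂, hz.2.trans_lt h₂⟩⟩⟩

theorem measurableSet_rangeInterior (f : ℝ → ℝ) : MeasurableSet (rangeInterior f) :=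
  (ordConnected_rangeInterior f).measurableSet

theorem Monotone.bddBelow_setOf_lt (hf : Monotone f) {s t₁ : ℝ} (h₁ : f t₁ < s) :
    BddBelow {t | s < f t} :=
  ⟨t₁, fun _ ht => le_of_not_ge fun h => (hf h).not_gt (h₁.trans ht)⟩

theorem Monotone.monotoneOn_rightContInv (hf : Monotone f) :
    MonotoneOn (rightContInv f) (rangeInterior f) :=
  fun _ ⟨⟨_, h₁⟩, _⟩ _ ⟨_, h₂⟩ hss' =>
    csInf_le_csInf (hf.bddBelow_setOf_lt h₁) h₂ fun _ ht => hss'.trans_lt ht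

theorem rightContInv_lt_iff (hf : Monotone f) (hc : Continuous f) {s c : ℝ}
    (hs : s ∈ rangeInterior f) : rightContInv f s < c ↔ s < f c := by
  obtain ⟨⟨_, h₁⟩, h₂⟩ := hs
  rw [rightContInv, csInf_lt_iff (hf.bddBelow_setOf_lt h₁) h₂]
  constructor
  · rintro ⟨t, ht, htc⟩
    exact ht.trans_le (hf htc.le)
  · intro h
    have hnear : ∀ᶠ t in 𝓝[<] c, s < f t ∧ t < c :=
      (((hc.tendsto c).mono_left nhdsWithin_le_nhds).eventually (lt_mem_nhds h)).and
        self_mem_nhdsWithin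
    exact hnear.exists

theorem rangeInterior_inter_preimage_Ico (hf : Monotone f) (hc : Continuous f) (a b : ℝ) :
    rangeInterior f ∩ rightContInv f ⁻¹' Ico a b = rangeInterior f ∩ Ico (f a) (f b) := by
  ext s
  simp only [mem_inter_iff, mem_preimage, mem_Ico, and_congr_right_iff]
  intro hs
  rw [← not_lt, rightContInv_lt_iff hf hc hs, not_lt, rightContInv_lt_iff hf hc hs]

theorem volume_rangeInterior_inter_Ico (f : ℝ → ℝ) (a b : ℝ) :
    volume (rangeInterior f ∩ Ico (f a) (f b)) = ENNReal.ofReal (f b - f a) := by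
  refine le_antisymm ?_ ?_
  · exact (measure_mono inter_subset_right).trans Real.volume_Ico.le
  · rw [← Real.volume_Ioo]
    exact measure_mono fun s hs => ⟨⟨⟨a, hs.1⟩, ⟨b, hs.2⟩⟩, Ioo_subset_Ico_self hs⟩

theorem aemeasurable_rightContInv (hf : Monotone f) :
    AEMeasurable (rightContInv f) (volume.restrict (rangeInterior f)) :=
  aemeasurable_restrict_of_monotoneOn (measurableSet_rangeInterior f) hf.monotoneOn_rightContInv

end RightContInv

theorem StieltjesFunction.map_rightContInv_restrict_rangeInterior (f : StieltjesFunction ℝ)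
    (hc : Continuous f) :
    (volume.restrict (rangeInterior f)).map (rightContInv f) = f.measure := by
  refine (Measure.ext_of_Ico _ _ fun a b _ => ?_).symm
  rw [f.measure_Ico, hc.continuousWithinAt.leftLim_eq, hc.continuousWithinAt.leftLim_eq,
    Measure.map_apply_of_aemeasurable (aemeasurable_rightContInv f.mono) measurableSet_Ico,
    Measure.restrict_apply' (measurableSet_rangeInterior f), inter_comm,
    rangeInterior_inter_preimage_Ico f.mono hc, volume_rangeInterior_inter_Ico]

section IndicatorPrimitive

variable {E : Set ℝ}

theorem intervalIntegrable_indicator_one (hE : MeasurableSet E) (a b : ℝ) :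
    IntervalIntegrable (E.indicator (1 : ℝ → ℝ)) volume a b :=
  have h : IntervalIntegrable (1 : ℝ → ℝ) volume a b := intervalIntegrable_const
  ⟨h.1.indicator hE, h.2.indicator hE⟩

theorem integral_indicator_one_of_le (hE : MeasurableSet E) {a b : ℝ} (hab : a ≤ b) :
    ∫ x in a..b, E.indicator 1 x = volume.real (E ∩ Ioc a b) := by
  rw [intervalIntegral.integral_of_le hab, integral_indicator_one hE,
    measureReal_restrict_apply hE]

theorem sign_mul_volume_inter_uIcc (hE : MeasurableSet E) (t : ℝ) :
    Real.sign t * (volume (E ∩ uIcc 0 t)).toReal = ∫ x in 0..t, E.indicator 1 x := by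
  have hIcc {a b : ℝ} (hab : a ≤ b) :
      (volume (E ∩ Icc a b)).toReal = ∫ x in a..b, E.indicator 1 x := by
    rw [integral_indicator_one_of_le hE hab, measureReal_def,
      measure_congr ((ae_eq_refl E).inter Ioc_ae_eq_Icc)]
  rcases lt_trichotomy t 0 with ht | rfl | ht
  · rw [Real.sign_of_neg ht, uIcc_of_ge ht.le, hIcc ht.le, intervalIntegral.integral_symm]
    ring
  · simp
  · rw [Real.sign_of_pos ht, uIcc_of_le ht.le, hIcc ht.le, one_mul]

theorem integral_indicator_one_sub (hE : MeasurableSet E) {a b : ℝ} (hab : a ≤ b) :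
    (∫ x in 0..b, E.indicator 1 x) - ∫ x in 0..a, E.indicator 1 x =
      volume.real (E ∩ Ioc a b) := by
  rw [intervalIntegral.integral_interval_sub_left (intervalIntegrable_indicator_one hE 0 b)
    (intervalIntegrable_indicator_one hE 0 a), integral_indicator_one_of_le hE hab]

theorem continuous_primitive_indicator_one (hE : MeasurableSet E) :
    Continuous fun t => ∫ x in 0..t, E.indicator (1 : ℝ → ℝ) x :=
  intervalIntegral.continuous_primitive (intervalIntegrable_indicator_one hE) 0

noncomputable def indicatorPrimitive (hE : MeasurableSet E) : StieltjesFunction ℝ where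
  toFun t := ∫ x in 0..t, E.indicator 1 x
  mono' _ _ hab := sub_nonneg.1 <| integral_indicator_one_sub hE hab ▸ measureReal_nonneg
  right_continuous' _ := (continuous_primitive_indicator_one hE).continuousWithinAt

theorem indicatorPrimitive_apply (hE : MeasurableSet E) (t : ℝ) :
    indicatorPrimitive hE t = ∫ x in 0..t, E.indicator 1 x :=
  rfl

theorem measure_indicatorPrimitive (hE : MeasurableSet E) :
    (indicatorPrimitive hE).measure = volume.restrict E := by
  refine Measure.ext_of_Ioc _ _ fun a b hab => ?_
  rw [StieltjesFunction.measure_Ioc, indicatorPrimitive_apply, indicatorPrimitive_apply,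
    integral_indicator_one_sub hE hab.le, ofReal_measureReal
      (measure_inter_lt_top_of_right_ne_top measure_Ioc_lt_top.ne).ne,
    Measure.restrict_apply measurableSet_Ioc, inter_comm]

end IndicatorPrimitive

/-- With `ρ(t) := sgn(t)·leb(E ∩ [0 ∧ t, 0 ∨ t])` and right-continuous inverse
`ζ(s) := inf{t : ρ(t) > s}`, the pushforward of Lebesgue measure on `(inf ρ, sup ρ)` under `ζ`
equals `𝟙_E·leb`: for every Borel `A`,
`leb({s ∈ (inf ρ, sup ρ) : ζ(s) ∈ A}) = leb(E ∩ A)`. -/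
theorem stmt_8 (E : Set ℝ) (hE : MeasurableSet E)
    (ρ : ℝ → ℝ) (hρ : ∀ t, ρ t = Real.sign t * (volume (E ∩ Set.uIcc 0 t)).toReal)
    (ζ : ℝ → ℝ) (hζ : ∀ s, ζ s = sInf {t : ℝ | s < ρ t}) :
    ∀ A : Set ℝ, MeasurableSet A →
      volume {s : ℝ | (∃ t₁, ρ t₁ < s) ∧ (∃ t₂, s < ρ t₂) ∧ ζ s ∈ A} = volume (E ∩ A) := by
  intro A hA
  set F := indicatorPrimitive hE
  obtain rfl : ρ = F := funext fun t => (hρ t).trans (sign_mul_volume_inter_uIcc hE t)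
  obtain rfl : ζ = rightContInv F := funext hζ
  have hpush := F.map_rightContInv_restrict_rangeInterior (continuous_primitive_indicator_one hE)
  rw [measure_indicatorPrimitive] at hpush
  calc volume {s | (∃ t₁, F t₁ < s) ∧ (∃ t₂, s < F t₂) ∧ rightContInv F s ∈ A}
      = (volume.restrict (rangeInterior F)).map (rightContInv F) A := by
        rw [Measure.map_apply_of_aemeasurable (aemeasurable_rightContInv F.mono) hA,
          Measure.restrict_apply' (measurableSet_rangeInterior F)]
        congr 1
        ext s
        simp only [rangeInterior, mem_ofPred_eq, mem_inter_iff, mem_preimage]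
        tauto
    _ = volume (E ∩ A) := by rw [hpush, Measure.restrict_apply hA, inter_comm]
end

section
/- Let Φ : (0,∞) → (0,∞) be given by Φ(λ) = ∫₀^∞ e^{−λx} Π̄(x) dx, where Π̄ : (0,∞) → [0,∞) is nonincreasing and satisfies liminf_{x↓0} Π̄(x)·x·(log(1/x))³ > 0. Then liminf_{λ→∞} (log λ)² · Φ(λ)/λ > 0. -/
/-!
Near `0` the tail satisfies `Π̄(x) ≥ c / (x (log (1/x))³)`, and `1 / (2 (log x)²)` is an
antiderivative of `1 / (x (log (1/x))³)`. On `[λ⁻², λ⁻¹]` the factor `e^{-λx}` is at least `e⁻¹`,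
so `Φ(λ)/λ ≥ e⁻¹ c ∫_{λ⁻²}^{λ⁻¹} dx / (x (log (1/x))³) = 3 e⁻¹ c / (8 (log λ)²)`.
-/

open MeasureTheory Filter Real Set

lemma hasDerivAt_inv_two_mul_log_sq {x : ℝ} (hx0 : 0 < x) (hx1 : x < 1) :
    HasDerivAt (fun y => (2 * log y ^ 2)⁻¹) (x * log (1 / x) ^ 3)⁻¹ x := by
  have hlog : log x ≠ 0 := (log_neg hx0 hx1).ne
  have h := (((hasDerivAt_log hx0.ne').fun_pow 2).const_mul 2).fun_inv
    (mul_ne_zero two_ne_zero (pow_ne_zero 2 hlog))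
  refine h.congr_deriv ?_
  rw [one_div, log_inv]
  field_simp
  norm_num

lemma continuousOn_inv_mul_log_inv_pow_three :
    ContinuousOn (fun x : ℝ => (x * log (1 / x) ^ 3)⁻¹) (Ioo 0 1) := fun x ⟨hx0, hx1⟩ => by
  have : 0 < log (1 / x) := log_pos (one_lt_one_div hx0 hx1)
  exact ContinuousAt.continuousWithinAt (by fun_prop (disch := positivity))

lemma uIcc_subset_Ioo_zero_one {a b : ℝ} (ha : 0 < a) (hab : a ≤ b) (hb : b < 1) :
    uIcc a b ⊆ Ioo 0 1 := by
  rw [uIcc_of_le hab]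
  exact Icc_subset_Ioo ha hb

lemma intervalIntegrable_inv_mul_log_inv_pow_three {a b : ℝ} (ha : 0 < a) (hab : a ≤ b)
    (hb : b < 1) : IntervalIntegrable (fun x => (x * log (1 / x) ^ 3)⁻¹) volume a b :=
  (continuousOn_inv_mul_log_inv_pow_three.mono
    (uIcc_subset_Ioo_zero_one ha hab hb)).intervalIntegrable

lemma integral_inv_mul_log_inv_pow_three {a b : ℝ} (ha : 0 < a) (hab : a ≤ b) (hb : b < 1) :
    ∫ x in a..b, (x * log (1 / x) ^ 3)⁻¹ = (2 * log b ^ 2)⁻¹ - (2 * log a ^ 2)⁻¹ :=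
  intervalIntegral.integral_eq_sub_of_hasDerivAt
    (fun _ hx => hasDerivAt_inv_two_mul_log_sq (uIcc_subset_Ioo_zero_one ha hab hb hx).1
      (uIcc_subset_Ioo_zero_one ha hab hb hx).2)
    (intervalIntegrable_inv_mul_log_inv_pow_three ha hab hb)

lemma integral_inv_mul_log_inv_pow_three_sq_inv {l : ℝ} (hl : 1 < l) :
    ∫ x in (l ^ 2)⁻¹..l⁻¹, (x * log (1 / x) ^ 3)⁻¹ = 3 / (8 * log l ^ 2) := by
  have hlog : log l ≠ 0 := (log_pos hl).ne'
  rw [integral_inv_mul_log_inv_pow_three (by positivity)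
    (inv_anti₀ (by positivity) (by nlinarith)) (inv_lt_one_of_one_lt₀ hl)]
  rw [log_inv, log_inv, log_pow]
  field_simp
  ring

lemma intervalIntegral_le_setIntegral_of_le {f g : ℝ → ℝ} {s : Set ℝ} {a b : ℝ} (hab : a ≤ b)
    (hs : MeasurableSet s) (hsub : Ioc a b ⊆ s) (hg : IntervalIntegrable g volume a b)
    (hf : IntegrableOn f s) (hf0 : ∀ x ∈ s, 0 ≤ f x) (hgf : ∀ x ∈ Icc a b, g x ≤ f x) :
    ∫ x in a..b, g x ≤ ∫ x in s, f x :=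
  calc ∫ x in a..b, g x
      ≤ ∫ x in a..b, f x := intervalIntegral.integral_mono_on hab hg
        ((intervalIntegrable_iff_integrableOn_Ioc_of_le hab).mpr (hf.mono_set hsub)) hgf
    _ = ∫ x in Ioc a b, f x := intervalIntegral.integral_of_le hab
    _ ≤ ∫ x in s, f x := setIntegral_mono_set hf
        ((ae_restrict_iff' hs).mpr (ae_of_all _ hf0)) hsub.eventuallyLE

lemma exp_neg_one_mul_mul_inv_le {c p l x : ℝ} (hc : 0 ≤ c) (hx0 : 0 < x) (hx1 : x < 1)
    (hlx : l * x ≤ 1) (hp : c ≤ p * x * log (1 / x) ^ 3) :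
    exp (-1) * c * (x * log (1 / x) ^ 3)⁻¹ ≤ exp (-l * x) * p := by
  have hlog : 0 < log (1 / x) := log_pos (one_lt_one_div hx0 hx1)
  have hcp : c * (x * log (1 / x) ^ 3)⁻¹ ≤ p := by
    rw [← div_eq_mul_inv, div_le_iff₀ (by positivity), ← mul_assoc]
    exact hp
  have hexp : exp (-1) ≤ exp (-l * x) := by
    rw [exp_le_exp, neg_mul, neg_le_neg_iff]
    exact hlx
  rw [mul_assoc]
  exact mul_le_mul hexp hcp (by positivity) (exp_pos _).le

theorem stmt_9_general (Pibar : ℝ → ℝ) (hnn : ∀ x, 0 < x → 0 ≤ Pibar x)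
    (htail : ∃ c > (0:ℝ), ∀ᶠ x in nhdsWithin 0 (Set.Ioi 0),
      c ≤ Pibar x * x * (Real.log (1 / x)) ^ 3)
    (Φ : ℝ → ℝ) (hΦpos : ∀ l, 0 < l → 0 < Φ l)
    (hΦ : ∀ l, 0 < l → Φ l / l = ∫ x in Set.Ioi (0:ℝ), Real.exp (-l * x) * Pibar x) :
    ∃ c > (0:ℝ), ∀ᶠ l in atTop, c ≤ (Real.log l) ^ 2 * (Φ l / l) := by
  obtain ⟨c, hc, htail⟩ := htail
  obtain ⟨δ, hδ, hδc⟩ := mem_nhdsGT_iff_exists_Ioo_subset.mp htail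
  refine ⟨exp (-1) * c * 3 / 8, by positivity, ?_⟩
  filter_upwards [eventually_gt_atTop (max 1 δ⁻¹)] with l hl
  obtain ⟨hl1, hlδ⟩ := max_lt_iff.mp hl
  have hl0 : 0 < l := one_pos.trans hl1
  have hab : (l ^ 2)⁻¹ ≤ l⁻¹ := inv_anti₀ hl0 (by nlinarith)
  have hint : IntegrableOn (fun x => exp (-l * x) * Pibar x) (Ioi 0) :=
    .of_integral_ne_zero (by rw [← hΦ l hl0]; exact (div_pos (hΦpos l hl0) hl0).ne')
  have hbound : ∀ x ∈ Icc (l ^ 2)⁻¹ l⁻¹,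
      exp (-1) * c * (x * log (1 / x) ^ 3)⁻¹ ≤ exp (-l * x) * Pibar x := by
    rintro x ⟨hax, hxb⟩
    have hx0 : 0 < x := lt_of_lt_of_le (by positivity) hax
    refine exp_neg_one_mul_mul_inv_le hc.le hx0 (hxb.trans_lt (inv_lt_one_of_one_lt₀ hl1))
      ((le_inv_mul_iff₀ hl0).mp (by simpa using hxb)) ?_
    exact hδc ⟨hx0, hxb.trans_lt (inv_lt_of_inv_lt₀ hδ hlδ)⟩
  have hlower : exp (-1) * c * (3 / (8 * log l ^ 2)) ≤ Φ l / l := by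
    rw [hΦ l hl0, ← integral_inv_mul_log_inv_pow_three_sq_inv hl1,
      ← intervalIntegral.integral_const_mul]
    refine intervalIntegral_le_setIntegral_of_le hab measurableSet_Ioi
      (fun x hx => lt_of_lt_of_le (by positivity) hx.1.le) ?_ hint
      (fun x hx => mul_nonneg (exp_pos _).le (hnn x hx)) hbound
    exact (intervalIntegrable_inv_mul_log_inv_pow_three (by positivity) hab
      (inv_lt_one_of_one_lt₀ hl1)).const_mul _
  have hlog : log l ≠ 0 := (log_pos hl1).ne'
  calc exp (-1) * c * 3 / 8 = log l ^ 2 * (exp (-1) * c * (3 / (8 * log l ^ 2))) := by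
        field_simp
    _ ≤ log l ^ 2 * (Φ l / l) := by gcongr

/-- If `Π̄ : (0,∞) → [0,∞)` is nonincreasing with
`liminf_{x↓0} Π̄(x)·x·(log(1/x))³ > 0`, and `Φ` is such that
`Φ(λ)/λ = ∫₀^∞ e^{−λx} Π̄(x) dx`, then `liminf_{λ→∞} (log λ)² Φ(λ)/λ > 0`. -/
theorem stmt_9 (Pibar : ℝ → ℝ) (hnn : ∀ x, 0 < x → 0 ≤ Pibar x)
    (hmono : ∀ x y, 0 < x → x ≤ y → Pibar y ≤ Pibar x)
    (htail : ∃ c > (0:ℝ), ∀ᶠ x in nhdsWithin 0 (Set.Ioi 0),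
      c ≤ Pibar x * x * (Real.log (1 / x)) ^ 3)
    (Φ : ℝ → ℝ) (hΦpos : ∀ l, 0 < l → 0 < Φ l)
    (hΦ : ∀ l, 0 < l → Φ l / l = ∫ x in Set.Ioi (0:ℝ), Real.exp (-l * x) * Pibar x) :
    ∃ c > (0:ℝ), ∀ᶠ l in atTop, c ≤ (Real.log l) ^ 2 * (Φ l / l) :=
  stmt_9_general Pibar hnn htail Φ hΦpos hΦ
end
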